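/- As real σ → 1 from the right, Σ_p p^{−σ} ~ log(1/(σ − 1)); that is, the limit of (Σ_p p^{−σ}) / log(1/(σ − 1)) as σ ↓ 1 equals 1. -/

import Mathlib

open Filter Real

lemma log_one_sub_bounds {x : ℝ} (hx0 : 0 < x) (hx : x ≤ 1/2) :
    x ≤ -Real.log (1 - x) ∧ -Real.log (1 - x) ≤ x + 2 * x ^ 2 := by
  have h1 : (0:ℝ) < 1 - x := by linarith
  constructor
  · have := Real.log_le_sub_one_of_pos h1
    linarith
  · have h2 : -Real.log (1 - x) = Real.log (1 - x)⁻¹ := by rw [Real.log_inv]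
    have h3 : Real.log (1 - x)⁻¹ ≤ (1 - x)⁻¹ - 1 :=
      Real.log_le_sub_one_of_pos (by positivity)
    have h4 : (1 - x)⁻¹ - 1 ≤ x + 2 * x ^ 2 := by
      rw [sub_le_iff_le_add, inv_le_iff_one_le_mul₀ h1]
      nlinarith
    linarith

lemma exp_tsum_primes (σ : ℝ) (hσ : 1 < σ) :
    Real.exp (∑' p : Nat.Primes, -Real.log (1 - ((p : ℕ) : ℝ) ^ (-σ))) =
      ∑' n : ℕ, 1 / (n : ℝ) ^ σ := by
  have hre : 1 < (σ : ℂ).re := by simpa using hσ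
  have hζ := riemannZeta_eulerProduct_exp_log hre
  rw [zeta_eq_tsum_one_div_nat_cpow hre] at hζ
  have hterm : ∀ p : Nat.Primes,
      -Complex.log (1 - ((p : ℕ) : ℂ) ^ (-(σ : ℂ))) =
        ((-Real.log (1 - ((p : ℕ) : ℝ) ^ (-σ)) : ℝ) : ℂ) := by
    intro p
    have hp1 : (1 : ℝ) < ((p : ℕ) : ℝ) := by exact_mod_cast p.prop.one_lt
    have hx1 : ((p : ℕ) : ℝ) ^ (-σ) < 1 :=
      Real.rpow_lt_one_of_one_lt_of_neg hp1 (by linarith)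
    have hcp : ((((p : ℕ) : ℝ) ^ (-σ) : ℝ) : ℂ) = ((p : ℕ) : ℂ) ^ (-(σ : ℂ)) := by
      rw [Complex.ofReal_cpow (by positivity)]
      push_cast
      ring_nf
    rw [← hcp, show ((1 : ℂ) - ((((p : ℕ) : ℝ) ^ (-σ) : ℝ) : ℂ)) =
        (((1 - ((p : ℕ) : ℝ) ^ (-σ) : ℝ)) : ℂ) by push_cast; ring,
      ← Complex.ofReal_log (by linarith), Complex.ofReal_neg]
  rw [tsum_congr hterm, ← Complex.ofReal_tsum, ← Complex.ofReal_exp] at hζ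
  have hrhs : (∑' n : ℕ, 1 / ((n : ℂ)) ^ (σ : ℂ)) =
      (((∑' n : ℕ, 1 / (n : ℝ) ^ σ : ℝ)) : ℂ) := by
    rw [Complex.ofReal_tsum]
    refine tsum_congr fun n => ?_
    rw [Complex.ofReal_div, Complex.ofReal_cpow n.cast_nonneg]
    push_cast
    ring_nf
  rw [hrhs] at hζ
  exact_mod_cast hζ

/-- As `σ → 1⁺`, `Σ_p p^{−σ} ~ log (1/(σ − 1))`: the ratio tends to `1`. -/
theorem primes_rpow_asymp_log :
    Tendsto
      (fun σ : ℝ =>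
        (∑' p : Nat.Primes, ((p : ℕ) : ℝ) ^ (-σ)) / Real.log (1 / (σ - 1)))
      (nhdsWithin 1 (Set.Ioi 1)) (nhds 1) := by
  set S : ℝ → ℝ := fun σ => ∑' p : Nat.Primes, ((p : ℕ) : ℝ) ^ (-σ) with hS
  set T : ℝ → ℝ := fun σ => ∑' p : Nat.Primes, -Real.log (1 - ((p : ℕ) : ℝ) ^ (-σ)) with hT
  set L : ℝ → ℝ := fun σ => Real.log (1 / (σ - 1)) with hL
  set C : ℝ := ∑' p : Nat.Primes, 2 * ((p : ℕ) : ℝ) ^ (-2 : ℝ) with hC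
  have hCsum : Summable (fun p : Nat.Primes => 2 * ((p : ℕ) : ℝ) ^ (-2 : ℝ)) :=
    (Nat.Primes.summable_rpow.mpr (by norm_num)).mul_left 2
  -- basic facts for σ > 1
  have key : ∀ σ : ℝ, 1 < σ →
      Summable (fun p : Nat.Primes => ((p : ℕ) : ℝ) ^ (-σ)) ∧
      0 ≤ T σ - S σ ∧ T σ - S σ ≤ C := by
    intro σ hσ
    have hxs : Summable (fun p : Nat.Primes => ((p : ℕ) : ℝ) ^ (-σ)) :=
      Nat.Primes.summable_rpow.mpr (by linarith)
    have hx : ∀ p : Nat.Primes, 0 < ((p : ℕ) : ℝ) ^ (-σ) ∧ ((p : ℕ) : ℝ) ^ (-σ) ≤ 1/2 := by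
      intro p
      have hp1 : (1 : ℝ) < ((p : ℕ) : ℝ) := by exact_mod_cast p.prop.one_lt
      have hp2 : (2 : ℝ) ≤ ((p : ℕ) : ℝ) := by exact_mod_cast p.prop.two_le
      refine ⟨by positivity, ?_⟩
      calc ((p : ℕ) : ℝ) ^ (-σ) ≤ ((p : ℕ) : ℝ) ^ (-1 : ℝ) :=
            Real.rpow_le_rpow_of_exponent_le (by linarith) (by linarith)
        _ = ((p : ℕ) : ℝ)⁻¹ := by rw [Real.rpow_neg_one]
        _ ≤ 1/2 := by
            rw [inv_le_comm₀ (by linarith) (by norm_num)]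
            linarith
    have hbd : ∀ p : Nat.Primes,
        ((p : ℕ) : ℝ) ^ (-σ) ≤ -Real.log (1 - ((p : ℕ) : ℝ) ^ (-σ)) ∧
        -Real.log (1 - ((p : ℕ) : ℝ) ^ (-σ)) ≤
          ((p : ℕ) : ℝ) ^ (-σ) + 2 * ((p : ℕ) : ℝ) ^ (-2 : ℝ) := by
      intro p
      obtain ⟨h0, h12⟩ := hx p
      obtain ⟨hl, hu⟩ := log_one_sub_bounds h0 h12
      refine ⟨hl, hu.trans ?_⟩
      have hp1 : (1 : ℝ) ≤ ((p : ℕ) : ℝ) := by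
        exact_mod_cast p.prop.one_lt.le
      have : (((p : ℕ) : ℝ) ^ (-σ)) ^ 2 ≤ ((p : ℕ) : ℝ) ^ (-2 : ℝ) := by
        rw [← Real.rpow_natCast (((p : ℕ) : ℝ) ^ (-σ)) 2, ← Real.rpow_mul (by positivity)]
        push_cast
        exact Real.rpow_le_rpow_of_exponent_le hp1 (by linarith)
      linarith
    have hgs : Summable (fun p : Nat.Primes => -Real.log (1 - ((p : ℕ) : ℝ) ^ (-σ))) := by
      refine Summable.of_nonneg_of_le (fun p => ?_) (fun p => (hbd p).2) (hxs.add hCsum)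
      have := (hbd p).1
      have := (hx p).1
      linarith
    refine ⟨hxs, ?_, ?_⟩
    · rw [hT, hS, ← Summable.tsum_sub hgs hxs]
      exact tsum_nonneg fun p => by linarith [(hbd p).1]
    · rw [hT, hS, ← Summable.tsum_sub hgs hxs, hC]
      refine Summable.tsum_le_tsum (fun p => by linarith [(hbd p).2]) (hgs.sub hxs) hCsum
  -- T σ + log (σ - 1) → 0
  have hTlog : Tendsto (fun σ => T σ + Real.log (σ - 1)) (nhdsWithin 1 (Set.Ioi 1)) (nhds 0) := by
    have h1 : Tendsto (fun σ : ℝ => Real.log ((σ - 1) * ∑' n : ℕ, 1 / (n : ℝ) ^ σ))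
        (nhdsWithin 1 (Set.Ioi 1)) (nhds 0) := by
      have := (Real.continuousAt_log one_ne_zero).tendsto.comp tendsto_sub_mul_tsum_nat_rpow
      simpa [Function.comp_def] using this
    refine h1.congr' ?_
    filter_upwards [self_mem_nhdsWithin] with σ hσ
    simp only [Set.mem_Ioi] at hσ
    have hexp := exp_tsum_primes σ hσ
    have hpos : (0 : ℝ) < ∑' n : ℕ, 1 / (n : ℝ) ^ σ := hexp ▸ Real.exp_pos _
    rw [Real.log_mul (by linarith) hpos.ne', ← hexp, Real.log_exp]
    ring
  -- L → atTop
  have hLtop : Tendsto L (nhdsWithin 1 (Set.Ioi 1)) atTop := by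
    have h1 : Tendsto (fun σ : ℝ => σ - 1) (nhdsWithin 1 (Set.Ioi 1))
        (nhdsWithin 0 (Set.Ioi 0)) := by
      refine tendsto_nhdsWithin_of_tendsto_nhds_of_eventually_within _ ?_ ?_
      · have : Tendsto (fun σ : ℝ => σ - 1) (nhds 1) (nhds 0) := by
          have h := (continuous_sub_right (1:ℝ)).tendsto 1
          simpa using h
        exact this.mono_left nhdsWithin_le_nhds
      · filter_upwards [self_mem_nhdsWithin] with σ hσ
        simp only [Set.mem_Ioi] at hσ ⊢
        linarith
    have := Real.tendsto_log_atTop.comp (tendsto_inv_nhdsGT_zero.comp h1)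
    refine this.congr fun σ => ?_
    simp [hL, one_div]
  -- eventually |S - L| ≤ C + 1
  have hDbd : ∀ᶠ σ in nhdsWithin 1 (Set.Ioi 1), |S σ - L σ| ≤ C + 1 := by
    have hT1 : ∀ᶠ σ in nhdsWithin 1 (Set.Ioi 1), |T σ + Real.log (σ - 1)| ≤ 1 := by
      have := hTlog.eventually (eventually_abs_sub_lt 0 one_pos)
      filter_upwards [this] with σ h
      simpa using h.le
    filter_upwards [hT1, self_mem_nhdsWithin] with σ h1 hσ
    simp only [Set.mem_Ioi] at hσ
    obtain ⟨_, hd0, hdC⟩ := key σ hσ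
    have hLeq : L σ = -Real.log (σ - 1) := by
      simp only [hL, one_div, Real.log_inv]
    have : S σ - L σ = (S σ - T σ) + (T σ + Real.log (σ - 1)) := by
      rw [hLeq]; ring
    rw [this]
    calc |(S σ - T σ) + (T σ + Real.log (σ - 1))|
        ≤ |S σ - T σ| + |T σ + Real.log (σ - 1)| := abs_add_le _ _
      _ ≤ C + 1 := by
          have : |S σ - T σ| ≤ C := by
            rw [abs_sub_comm, abs_of_nonneg hd0]; exact hdC
          linarith
  -- conclude
  have hquot : Tendsto (fun σ => (S σ - L σ) / L σ) (nhdsWithin 1 (Set.Ioi 1)) (nhds 0) := by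
    have hLpos : ∀ᶠ σ in nhdsWithin 1 (Set.Ioi 1), 0 < L σ :=
      hLtop.eventually_gt_atTop 0
    refine squeeze_zero_norm' ?_ (tendsto_const_nhds.div_atTop hLtop (a := C + 1))
    filter_upwards [hDbd, hLpos] with σ h1 h2
    rw [Real.norm_eq_abs, abs_div, abs_of_pos h2]
    exact div_le_div_of_nonneg_right h1 h2.le
  have : Tendsto (fun σ => (S σ - L σ) / L σ + 1) (nhdsWithin 1 (Set.Ioi 1)) (nhds 1) := by
    simpa using hquot.add tendsto_const_nhds
  refine this.congr' ?_
  filter_upwards [hLtop.eventually_gt_atTop 0] with σ h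
  rw [div_add_one h.ne', sub_add_cancel]
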